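/- arXiv:1311.4855 — 2 statements merged into one kernel-verified Lean document; each statement's English description precedes it below -/
import Mathlib

section
/- In the universal quasi-Whittaker module M_φ with cyclic quasi-Whittaker vector w, for every k ∈ ℤ₊ one has (p − φ(p))·Cᵏw = 0 and (q − φ(q))·Cᵏw = 0. Consequently, every nonzero element of the set {d(C)·w : d ∈ ℂ[x]} is a quasi-Whittaker vector of type φ. -/
open UniversalEnvelopingAlgebra Polynomial

namespace QW

variable {S : Type} [LieRing S] [LieAlgebra ℂ S]

/-- The chosen elements `e, h, f, p, q, z` form a basis of `S` and satisfy the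
structure constants of the Schrödinger algebra. -/
structure IsSchrodinger (e h f p q z : S) : Prop where
  indep : LinearIndependent ℂ ![e, h, f, p, q, z]
  spans : Submodule.span ℂ (Set.range ![e, h, f, p, q, z]) = ⊤
  lie_he : ⁅h, e⁆ = (2 : ℂ) • e
  lie_hf : ⁅h, f⁆ = (-2 : ℂ) • f
  lie_ef : ⁅e, f⁆ = h
  lie_hp : ⁅h, p⁆ = p
  lie_hq : ⁅h, q⁆ = -q
  lie_pq : ⁅p, q⁆ = z
  lie_eq : ⁅e, q⁆ = p
  lie_pf : ⁅p, f⁆ = -q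
  lie_fq : ⁅f, q⁆ = 0
  lie_ep : ⁅e, p⁆ = 0
  lie_ze : ⁅z, e⁆ = 0
  lie_zh : ⁅z, h⁆ = 0
  lie_zf : ⁅z, f⁆ = 0
  lie_zp : ⁅z, p⁆ = 0
  lie_zq : ⁅z, q⁆ = 0

/-- `v` is a quasi-Whittaker vector of type `φ`, where the Lie algebra homomorphism
`φ : ℌ → ℂ` is recorded by its values `φp = φ(p)`, `φq = φ(q)` (necessarily `φ(z) = 0`). -/
def IsQWVector (p q z : S) {V : Type} [AddCommGroup V] [Module ℂ V] [LieRingModule S V]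
    (φp φq : ℂ) (v : V) : Prop :=
  v ≠ 0 ∧ ⁅p, v⁆ = φp • v ∧ ⁅q, v⁆ = φq • v ∧ ⁅z, v⁆ = 0

/-- `V` is a quasi-Whittaker module of type `φ`: it is generated by a
quasi-Whittaker vector of type `φ`. -/
def IsQWModule (p q z : S) (V : Type) [AddCommGroup V] [Module ℂ V]
    [LieRingModule S V] [LieModule ℂ S V] (φp φq : ℂ) : Prop :=
  ∃ v : V, IsQWVector p q z φp φq v ∧ LieSubmodule.lieSpan ℂ S {v} = ⊤

/-- The action of the universal enveloping algebra `U(𝔖)` on a `𝔖`-module. -/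
noncomputable def uact {V : Type} [AddCommGroup V] [Module ℂ V] [LieRingModule S V]
    [LieModule ℂ S V] (u : UniversalEnvelopingAlgebra ℂ S) (v : V) : V :=
  UniversalEnvelopingAlgebra.lift ℂ (LieModule.toEnd ℂ S V) u v

/-- The element `C = φ(p)²f − φ(q)²e − φ(p)φ(q)h ∈ U(𝔖)`. -/
noncomputable def Cel (e h f : S) (φp φq : ℂ) : UniversalEnvelopingAlgebra ℂ S :=
  φp ^ 2 • ι ℂ f - φq ^ 2 • ι ℂ e - (φp * φq) • ι ℂ h

/-- The element `C₀ = p²f − q²e − hpq ∈ U(𝔖)`. -/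
noncomputable def C0 (e h f p q : S) : UniversalEnvelopingAlgebra ℂ S :=
  ι ℂ p ^ 2 * ι ℂ f - ι ℂ q ^ 2 * ι ℂ e - ι ℂ h * ι ℂ p * ι ℂ q

/-- `δ_{a,0}`, as a complex scalar. -/
noncomputable def dC (a : ℂ) : ℂ := if a = 0 then 1 else 0

/-- `δ_{a,0}`, as a natural number. -/
noncomputable def dN (a : ℂ) : ℕ := if a = 0 then 1 else 0

/-- `X = δ_{φ(q),0}e + δ_{φ(p),0}f`. -/
noncomputable def Xel (e f : S) (φp φq : ℂ) : UniversalEnvelopingAlgebra ℂ S :=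
  dC φq • ι ℂ e + dC φp • ι ℂ f

/-- `P₊ = δ_{φ(p),0}p + δ_{φ(q),0}q`. -/
noncomputable def Pplus (p q : S) (φp φq : ℂ) : UniversalEnvelopingAlgebra ℂ S :=
  dC φp • ι ℂ p + dC φq • ι ℂ q

/-- `P₋ = δ_{φ(q),0}p + δ_{φ(p),0}q`. -/
noncomputable def Pminus (p q : S) (φp φq : ℂ) : UniversalEnvelopingAlgebra ℂ S :=
  dC φq • ι ℂ p + dC φp • ι ℂ q

/-- The quotient of `U(𝔖)` by a left ideal `I` is a Lie module over `S`. -/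
noncomputable instance instLieRingModuleUQuot
    (I : Submodule (UniversalEnvelopingAlgebra ℂ S) (UniversalEnvelopingAlgebra ℂ S)) :
    LieRingModule S (UniversalEnvelopingAlgebra ℂ S ⧸ I) where
  bracket x m := ι ℂ x • m
  add_lie x y m := by
    show ι ℂ (x + y) • m = ι ℂ x • m + ι ℂ y • m
    rw [map_add, add_smul]
  lie_add x m n := by
    show ι ℂ x • (m + n) = ι ℂ x • m + ι ℂ x • n
    rw [smul_add]
  leibniz_lie x y m := by
    show ι ℂ x • (ι ℂ y • m) = ι ℂ ⁅x, y⁆ • m + ι ℂ y • (ι ℂ x • m)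
    letI : LieRing (UniversalEnvelopingAlgebra ℂ S) := LieRing.ofAssociativeRing
    rw [LieHom.map_lie, Ring.lie_def, sub_smul, mul_smul, mul_smul]
    abel

noncomputable instance instLieModuleUQuot
    (I : Submodule (UniversalEnvelopingAlgebra ℂ S) (UniversalEnvelopingAlgebra ℂ S)) :
    LieModule ℂ S (UniversalEnvelopingAlgebra ℂ S ⧸ I) where
  smul_lie c x m := by
    show ι ℂ (c • x) • m = c • (ι ℂ x • m)
    rw [map_smul, smul_assoc]
  lie_smul c x m := by
    show ι ℂ x • (c • m) = c • (ι ℂ x • m)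
    rw [← algebraMap_smul (UniversalEnvelopingAlgebra ℂ S) c m, ← mul_smul,
      ← Algebra.commutes, mul_smul, algebraMap_smul]

/-- The left ideal of `U(𝔖)` generated by `p − φ(p)1`, `q − φ(q)1` and `z`. -/
noncomputable def qwIdeal (p q z : S) (φp φq : ℂ) :
    Submodule (UniversalEnvelopingAlgebra ℂ S) (UniversalEnvelopingAlgebra ℂ S) :=
  Submodule.span _
    {ι ℂ p - algebraMap ℂ _ φp, ι ℂ q - algebraMap ℂ _ φq, ι ℂ z}

/-- The universal quasi-Whittaker module `M_φ = U(𝔖) ⊗_{U(ℌ)} ℂ_φ`, realised as the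
quotient of `U(𝔖)` by the left ideal generated by `p − φ(p)1`, `q − φ(q)1`, `z`. -/
noncomputable abbrev Mphi (p q z : S) (φp φq : ℂ) : Type :=
  UniversalEnvelopingAlgebra ℂ S ⧸ qwIdeal p q z φp φq

/-- The cyclic quasi-Whittaker vector `w = 1 ⊗ w` of `M_φ`. -/
noncomputable def wvec (p q z : S) (φp φq : ℂ) : Mphi p q z φp φq :=
  Submodule.Quotient.mk 1

/-- The submodule `W_{φ,ξ} = U(𝔖)(C − ξ)·w` of `M_φ`. -/
noncomputable def Wsub (e h f p q z : S) (φp φq ξ : ℂ) :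
    LieSubmodule ℂ S (Mphi p q z φp φq) :=
  LieSubmodule.lieSpan ℂ S
    {uact (Cel e h f φp φq - algebraMap ℂ _ ξ) (wvec p q z φp φq)}

/-- The quotient module `L_{φ,ξ} = M_φ / W_{φ,ξ}`. -/
noncomputable abbrev Lphi (e h f p q z : S) (φp φq ξ : ℂ) : Type :=
  Mphi p q z φp φq ⧸ Wsub e h f p q z φp φq ξ

/-- A (finite, decreasing) composition series `⊤ = W 0 > W 1 > ⋯ > W n = ⊥`
of a Lie module, with all the successive quotients irreducible. -/
def IsCompositionChain {V : Type} [AddCommGroup V] [Module ℂ V] [LieRingModule S V]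
    [LieModule ℂ S V] {n : ℕ} (W : Fin (n + 1) → LieSubmodule ℂ S V) : Prop :=
  W 0 = ⊤ ∧ W (Fin.last n) = ⊥ ∧
    ∀ i : Fin n, W i.succ < W i.castSucc ∧
      LieModule.IsIrreducible ℂ S
        (↥(W i.castSucc) ⧸ LieSubmodule.comap (W i.castSucc).incl (W i.succ))



section Aux

variable {V : Type} [AddCommGroup V] [Module ℂ V] [LieRingModule S V] [LieModule ℂ S V]

lemma uact_mul (u v : UniversalEnvelopingAlgebra ℂ S) (m : V) :
    uact (u * v) m = uact u (uact v m) := by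
  simp [uact, map_mul, Module.End.mul_apply]

lemma uact_add (u v : UniversalEnvelopingAlgebra ℂ S) (m : V) :
    uact (u + v) m = uact u m + uact v m := by
  simp [uact, map_add, LinearMap.add_apply]

lemma uact_sub (u v : UniversalEnvelopingAlgebra ℂ S) (m : V) :
    uact (u - v) m = uact u m - uact v m := by
  simp [uact, map_sub, LinearMap.sub_apply]

lemma uact_smul (c : ℂ) (u : UniversalEnvelopingAlgebra ℂ S) (m : V) :
    uact (c • u) m = c • uact u m := by
  simp [uact, map_smul, LinearMap.smul_apply]

lemma uact_apply_smul (u : UniversalEnvelopingAlgebra ℂ S) (c : ℂ) (m : V) :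
    uact u (c • m) = c • uact u m := map_smul _ _ _

lemma uact_apply_zero (u : UniversalEnvelopingAlgebra ℂ S) : uact u (0 : V) = 0 :=
  map_zero _

lemma uact_one (m : V) : uact (1 : UniversalEnvelopingAlgebra ℂ S) m = m := by
  simp [uact, map_one, Module.End.one_apply]

lemma uact_iota (x : S) (m : V) : uact (ι ℂ x) m = ⁅x, m⁆ := by
  simp [uact, lift_ι_apply, LieModule.toEnd_apply_apply]

lemma uact_algebraMap (c : ℂ) (m : V) :
    uact (algebraMap ℂ (UniversalEnvelopingAlgebra ℂ S) c) m = c • m := by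
  simp [uact, AlgHom.commutes, Module.algebraMap_end_apply]

lemma iota_mul (x y : S) :
    ι ℂ x * ι ℂ y = ι ℂ y * ι ℂ x + ι ℂ ⁅x, y⁆ := by
  letI : LieRing (UniversalEnvelopingAlgebra ℂ S) := LieRing.ofAssociativeRing
  have hl := (ι ℂ : S →ₗ⁅ℂ⁆ UniversalEnvelopingAlgebra ℂ S).map_lie x y
  rw [Ring.lie_def] at hl
  rw [hl]; abel

variable {e h f p q z : S} {φp φq : ℂ}

lemma p_mul_C (hS : IsSchrodinger e h f p q z) :
    ι ℂ p * Cel e h f φp φq =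
      Cel e h f φp φq * ι ℂ p + (φp * φq) • ι ℂ p - φp ^ 2 • ι ℂ q := by
  have hpf : ⁅p, f⁆ = -q := hS.lie_pf
  have hpe : ⁅p, e⁆ = (0 : S) := by rw [← neg_neg ⁅p, e⁆, lie_skew, hS.lie_ep, neg_zero]
  have hph : ⁅p, h⁆ = -p := by rw [← neg_neg ⁅p, h⁆, lie_skew, hS.lie_hp]
  simp only [Cel, mul_sub, sub_mul, mul_smul_comm, smul_mul_assoc,
    iota_mul p f, iota_mul p e, iota_mul p h, hpf, hpe, hph, map_neg, map_zero]
  module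

lemma q_mul_C (hS : IsSchrodinger e h f p q z) :
    ι ℂ q * Cel e h f φp φq =
      Cel e h f φp φq * ι ℂ q + φq ^ 2 • ι ℂ p - (φp * φq) • ι ℂ q := by
  have hqf : ⁅q, f⁆ = (0 : S) := by rw [← neg_neg ⁅q, f⁆, lie_skew, hS.lie_fq, neg_zero]
  have hqe : ⁅q, e⁆ = -p := by rw [← neg_neg ⁅q, e⁆, lie_skew, hS.lie_eq]
  have hqh : ⁅q, h⁆ = q := by rw [← neg_neg ⁅q, h⁆, lie_skew, hS.lie_hq, neg_neg]
  simp only [Cel, mul_sub, sub_mul, mul_smul_comm, smul_mul_assoc,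
    iota_mul q f, iota_mul q e, iota_mul q h, hqf, hqe, hqh, map_neg, map_zero]
  module

lemma z_mul_C (hS : IsSchrodinger e h f p q z) :
    ι ℂ z * Cel e h f φp φq = Cel e h f φp φq * ι ℂ z := by
  simp only [Cel, mul_sub, sub_mul, mul_smul_comm, smul_mul_assoc,
    iota_mul z f, iota_mul z e, iota_mul z h, hS.lie_zf, hS.lie_ze, hS.lie_zh, map_zero]
  module

/-- `p`, `q`, `z` act as the scalars `φp`, `φq`, `0` on a vector. -/
def Good (p q z : S) (φp φq : ℂ) (v : V) : Prop :=
  uact (ι ℂ p) v = φp • v ∧ uact (ι ℂ q) v = φq • v ∧ uact (ι ℂ z) v = 0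

lemma good_w : Good p q z φp φq (wvec p q z φp φq) := by
  have key : ∀ x : S, ∀ c : ℂ, ι ℂ x - algebraMap ℂ _ c ∈ qwIdeal p q z φp φq →
      uact (ι ℂ x) (wvec p q z φp φq) = c • wvec p q z φp φq := by
    intro x c hx
    rw [uact_iota]
    show ι ℂ x • (Submodule.Quotient.mk 1 : Mphi p q z φp φq) = c • Submodule.Quotient.mk 1
    rw [← Submodule.Quotient.mk_smul, ← Submodule.Quotient.mk_smul, Submodule.Quotient.eq]
    have : ι ℂ x • (1 : UniversalEnvelopingAlgebra ℂ S) - c • 1 = ι ℂ x - algebraMap ℂ _ c := by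
      rw [smul_eq_mul, mul_one, Algebra.algebraMap_eq_smul_one]
    rw [this]
    exact hx
  refine ⟨key p φp ?_, key q φq ?_, ?_⟩
  · exact Submodule.subset_span (by simp)
  · exact Submodule.subset_span (by simp)
  · have hz : ι ℂ z - algebraMap ℂ (UniversalEnvelopingAlgebra ℂ S) (0 : ℂ) ∈
        qwIdeal p q z φp φq := by
      rw [map_zero, sub_zero]
      exact Submodule.subset_span (by simp)
    rw [key z 0 hz, zero_smul]

lemma good_step (hS : IsSchrodinger e h f p q z) {v : V}
    (hv : Good p q z φp φq v) : Good p q z φp φq (uact (Cel e h f φp φq) v) := by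
  obtain ⟨hp, hq, hz⟩ := hv
  refine ⟨?_, ?_, ?_⟩
  · rw [← uact_mul, p_mul_C hS, uact_sub, uact_add, uact_mul, uact_smul, uact_smul,
      hp, hq, uact_apply_smul]
    module
  · rw [← uact_mul, q_mul_C hS, uact_sub, uact_add, uact_mul, uact_smul, uact_smul,
      hp, hq, uact_apply_smul]
    module
  · rw [← uact_mul, z_mul_C hS, uact_mul, hz, uact_apply_zero]

lemma good_smul (c : ℂ) {v : V} (hv : Good p q z φp φq v) :
    Good p q z φp φq (c • v) := by
  obtain ⟨hp, hq, hz⟩ := hv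
  refine ⟨?_, ?_, ?_⟩ <;> rw [uact_apply_smul]
  · rw [hp, smul_comm]
  · rw [hq, smul_comm]
  · rw [hz, smul_zero]

lemma good_add {v w : V} (hv : Good p q z φp φq v) (hw : Good p q z φp φq w) :
    Good p q z φp φq (v + w) := by
  obtain ⟨hp, hq, hz⟩ := hv
  obtain ⟨hp', hq', hz'⟩ := hw
  refine ⟨?_, ?_, ?_⟩ <;> rw [show ∀ u : UniversalEnvelopingAlgebra ℂ S,
    uact u (v + w) = uact u v + uact u w from fun u => map_add _ _ _]
  · rw [hp, hp', smul_add]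
  · rw [hq, hq', smul_add]
  · rw [hz, hz', add_zero]

lemma good_pow (hS : IsSchrodinger e h f p q z) (k : ℕ) :
    Good p q z φp φq (uact (Cel e h f φp φq ^ k) (wvec p q z φp φq)) := by
  induction k with
  | zero => rw [pow_zero, uact_one]; exact good_w
  | succ n ih =>
    rw [pow_succ', uact_mul]
    exact good_step hS ih

lemma good_aeval (hS : IsSchrodinger e h f p q z) (d : ℂ[X]) :
    Good p q z φp φq (uact (aeval (Cel e h f φp φq) d) (wvec p q z φp φq)) := by
  induction d using Polynomial.induction_on' with
  | add a b ha hb => rw [map_add, uact_add]; exact good_add ha hb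
  | monomial n a =>
    rw [aeval_monomial, ← Algebra.smul_def, uact_smul]
    exact good_smul a (good_pow hS n)

end Aux

/-- In `M_φ`, `(p − φ(p))·Cᵏw = 0` and `(q − φ(q))·Cᵏw = 0` for all `k`;
consequently every nonzero element of `{d(C)·w : d ∈ ℂ[x]}` is a quasi-Whittaker
vector of type `φ`. -/
theorem quasiWhittaker_vectors_in_Mphi
    (e h f p q z : S) (hS : IsSchrodinger e h f p q z)
    (φp φq : ℂ) (hφ : φp ≠ 0 ∨ φq ≠ 0) :
    (∀ k : ℕ,
        uact (ι ℂ p - algebraMap ℂ _ φp)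
          (uact (Cel e h f φp φq ^ k) (wvec p q z φp φq)) = 0 ∧
        uact (ι ℂ q - algebraMap ℂ _ φq)
          (uact (Cel e h f φp φq ^ k) (wvec p q z φp φq)) = 0) ∧
      ∀ d : ℂ[X], uact (aeval (Cel e h f φp φq) d) (wvec p q z φp φq) ≠ 0 →
        IsQWVector p q z φp φq (uact (aeval (Cel e h f φp φq) d) (wvec p q z φp φq)) := by
  have hgood := good_aeval (φp := φp) (φq := φq) hS
  constructor
  · intro k
    have hk := good_pow (φp := φp) (φq := φq) hS k
    constructor
    · rw [uact_sub, uact_algebraMap, hk.1, sub_self]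
    · rw [uact_sub, uact_algebraMap, hk.2.1, sub_self]
  · intro d hd
    have hg := hgood d
    exact ⟨hd, by rw [← uact_iota]; exact hg.1, by rw [← uact_iota]; exact hg.2.1,
      by rw [← uact_iota]; exact hg.2.2⟩


end QW
end

section
/- Let φ be nonzero, let V be a quasi-Whittaker module of type φ for 𝔖, and let W ⊆ V be a nonzero 𝔖-submodule. Then W contains a nonzero quasi-Whittaker vector of type φ. -/
open UniversalEnvelopingAlgebra Polynomial

namespace QW

variable {S : Type} [LieRing S] [LieAlgebra ℂ S]

private def QWD {V : Type} [AddCommGroup V] [Module ℂ V] (A B : Module.End ℂ V)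
    (n : ℕ) (v : V) : Prop :=
  ∀ L : List (Module.End ℂ V), (∀ t ∈ L, t = A ∨ t = B) → L.length = n → L.prod v = 0

private theorem QWD.mono {V : Type} [AddCommGroup V] [Module ℂ V]
    {A B : Module.End ℂ V} {n : ℕ} {v : V} (h : QWD A B n v) :
    QWD A B (n + 1) v := by
  intro L hL hlen
  cases L with
  | nil => simp at hlen
  | cons t L' =>
    rw [List.prod_cons, Module.End.mul_apply,
      h L' (fun s hs => hL s (List.mem_cons_of_mem _ hs)) (by simpa using hlen), map_zero]

private theorem QWD.le {V : Type} [AddCommGroup V] [Module ℂ V]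
    {A B : Module.End ℂ V} {n m : ℕ} {v : V} (hnm : n ≤ m) (h : QWD A B n v) :
    QWD A B m v := by
  induction hnm with
  | refl => exact h
  | step _ ih => exact ih.mono

private theorem qwd_zero {V : Type} [AddCommGroup V] [Module ℂ V]
    {A B : Module.End ℂ V} : QWD A B 0 (0 : V) := by
  intro L _ hlen
  rw [List.length_eq_zero_iff] at hlen
  simp [hlen]

private theorem QWD.add {V : Type} [AddCommGroup V] [Module ℂ V]
    {A B : Module.End ℂ V} {n : ℕ} {v w : V} (hv : QWD A B n v)
    (hw : QWD A B n w) : QWD A B n (v + w) := by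
  intro L hL hlen
  rw [map_add, hv L hL hlen, hw L hL hlen, add_zero]

private theorem QWD.smul {V : Type} [AddCommGroup V] [Module ℂ V]
    {A B : Module.End ℂ V} {n : ℕ} {v : V} (c : ℂ) (hv : QWD A B n v) :
    QWD A B n (c • v) := by
  intro L hL hlen
  rw [map_smul, hv L hL hlen, smul_zero]

private theorem qwd_apply {V : Type} [AddCommGroup V] [Module ℂ V]
    {A B : Module.End ℂ V} {n : ℕ} {v : V} (hv : QWD A B (n + 1) v)
    (t : Module.End ℂ V) (ht : t = A ∨ t = B) : QWD A B n (t v) := by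
  intro L hL hlen
  have key := hv (L.concat t) ?_ (by simp [hlen])
  · rwa [List.prod_concat, Module.End.mul_apply] at key
  · intro s hs
    rcases (by simpa using hs : s ∈ L ∨ s = t) with hs | hs
    · exact hL s hs
    · simp_all

private theorem qwd_lie {V : Type} [AddCommGroup V] [Module ℂ V]
    [LieRingModule S V] [LieModule ℂ S V] {A B : Module.End ℂ V}
    (hAB : ∀ t, t = A ∨ t = B → ∀ (x : S) (v : V),
      ∃ a b d : ℂ, t ⁅x, v⁆ = ⁅x, t v⁆ + a • A v + b • B v + d • v) :
    ∀ n, ∀ v : V, QWD A B n v → ∀ x : S, QWD A B (n + 1) ⁅x, v⁆ := by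
  intro n
  induction n with
  | zero =>
    intro v hv x
    have hv0 : v = 0 := by simpa using hv [] (by simp) rfl
    subst hv0
    rw [lie_zero]
    exact qwd_zero.mono
  | succ n ih =>
    intro v hv x L hL hlen
    rcases L.eq_nil_or_concat with rfl | ⟨L', t, rfl⟩
    · simp at hlen
    have hlen' : L'.length = n + 1 := by simpa using hlen
    have htAB : t = A ∨ t = B := hL t (by simp)
    have hL' : ∀ s ∈ L', s = A ∨ s = B := fun s hs => hL s (by simp [hs])
    obtain ⟨a, b, d, hab⟩ := hAB t htAB x v
    rw [List.prod_concat, Module.End.mul_apply, hab]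
    have h1 : QWD A B (n + 1) ⁅x, t v⁆ := ih (t v) (qwd_apply hv t htAB) x
    have h2 : QWD A B (n + 1) (a • A v) := ((qwd_apply hv A (Or.inl rfl)).smul a).mono
    have h3 : QWD A B (n + 1) (b • B v) := ((qwd_apply hv B (Or.inr rfl)).smul b).mono
    have h4 : QWD A B (n + 1) (d • v) := hv.smul d
    exact (((h1.add h2).add h3).add h4) L' hL' hlen'


/-- For `φ` nonzero, every nonzero submodule of a quasi-Whittaker module of
type `φ` contains a nonzero quasi-Whittaker vector of type `φ`. -/
theorem submodule_contains_quasiWhittaker_vector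
    (e h f p q z : S) (hS : IsSchrodinger e h f p q z)
    (φp φq : ℂ) (hφ : φp ≠ 0 ∨ φq ≠ 0)
    (V : Type) [AddCommGroup V] [Module ℂ V] [LieRingModule S V] [LieModule ℂ S V]
    (hV : IsQWModule p q z V φp φq)
    (W : LieSubmodule ℂ S V) (hW : W ≠ ⊥) :
    ∃ v ∈ W, IsQWVector p q z φp φq v := by
  obtain ⟨w, ⟨hw0, hwp, hwq, hwz⟩, hspan⟩ := hV
  have hmem : ∀ x : S, x ∈ Submodule.span ℂ (Set.range ![e, h, f, p, q, z]) := by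
    rw [hS.spans]; intro x; trivial
  have hzx : ∀ x : S, ⁅z, x⁆ = 0 := by
    intro x
    induction hmem x using Submodule.span_induction with
    | mem y hy =>
      obtain ⟨i, rfl⟩ := hy
      fin_cases i
      · exact hS.lie_ze
      · exact hS.lie_zh
      · exact hS.lie_zf
      · exact hS.lie_zp
      · exact hS.lie_zq
      · exact lie_self z
    | zero => simp
    | add u v _ _ hu hv => rw [lie_add, hu, hv, add_zero]
    | smul c u _ hu => rw [lie_smul, hu, smul_zero]
  have hpx : ∀ x : S, ∃ a b c : ℂ, ⁅p, x⁆ = a • p + b • q + c • z := by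
    intro x
    induction hmem x using Submodule.span_induction with
    | mem y hy =>
      obtain ⟨i, rfl⟩ := hy
      fin_cases i
      · exact ⟨0, 0, 0, by show (⁅p, e⁆ : S) = (0:ℂ) • p + (0:ℂ) • q + (0:ℂ) • z; rw [← lie_skew p e, hS.lie_ep]; module⟩
      · exact ⟨-1, 0, 0, by show (⁅p, h⁆ : S) = (-1:ℂ) • p + (0:ℂ) • q + (0:ℂ) • z; rw [← lie_skew p h, hS.lie_hp]; module⟩
      · exact ⟨0, -1, 0, by show (⁅p, f⁆ : S) = (0:ℂ) • p + (-1:ℂ) • q + (0:ℂ) • z; rw [hS.lie_pf]; module⟩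
      · exact ⟨0, 0, 0, by show (⁅p, p⁆ : S) = (0:ℂ) • p + (0:ℂ) • q + (0:ℂ) • z; rw [lie_self]; module⟩
      · exact ⟨0, 0, 1, by show (⁅p, q⁆ : S) = (0:ℂ) • p + (0:ℂ) • q + (1:ℂ) • z; rw [hS.lie_pq]; module⟩
      · exact ⟨0, 0, 0, by show (⁅p, z⁆ : S) = (0:ℂ) • p + (0:ℂ) • q + (0:ℂ) • z; rw [← lie_skew p z, hS.lie_zp]; module⟩
    | zero => exact ⟨0, 0, 0, by simp⟩
    | add u v _ _ hu hv =>
      obtain ⟨a1, b1, c1, h1⟩ := hu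
      obtain ⟨a2, b2, c2, h2⟩ := hv
      exact ⟨a1 + a2, b1 + b2, c1 + c2, by rw [lie_add, h1, h2]; module⟩
    | smul c u _ hu =>
      obtain ⟨a1, b1, c1, h1⟩ := hu
      exact ⟨c * a1, c * b1, c * c1, by rw [lie_smul, h1]; module⟩
  have hqx : ∀ x : S, ∃ a b c : ℂ, ⁅q, x⁆ = a • p + b • q + c • z := by
    intro x
    induction hmem x using Submodule.span_induction with
    | mem y hy =>
      obtain ⟨i, rfl⟩ := hy
      fin_cases i
      · exact ⟨-1, 0, 0, by show (⁅q, e⁆ : S) = (-1:ℂ) • p + (0:ℂ) • q + (0:ℂ) • z; rw [← lie_skew q e, hS.lie_eq]; module⟩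
      · exact ⟨0, 1, 0, by show (⁅q, h⁆ : S) = (0:ℂ) • p + (1:ℂ) • q + (0:ℂ) • z; rw [← lie_skew q h, hS.lie_hq]; module⟩
      · exact ⟨0, 0, 0, by show (⁅q, f⁆ : S) = (0:ℂ) • p + (0:ℂ) • q + (0:ℂ) • z; rw [← lie_skew q f, hS.lie_fq]; module⟩
      · exact ⟨0, 0, -1, by show (⁅q, p⁆ : S) = (0:ℂ) • p + (0:ℂ) • q + (-1:ℂ) • z; rw [← lie_skew q p, hS.lie_pq]; module⟩
      · exact ⟨0, 0, 0, by show (⁅q, q⁆ : S) = (0:ℂ) • p + (0:ℂ) • q + (0:ℂ) • z; rw [lie_self]; module⟩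
      · exact ⟨0, 0, 0, by show (⁅q, z⁆ : S) = (0:ℂ) • p + (0:ℂ) • q + (0:ℂ) • z; rw [← lie_skew q z, hS.lie_zq]; module⟩
    | zero => exact ⟨0, 0, 0, by simp⟩
    | add u v _ _ hu hv =>
      obtain ⟨a1, b1, c1, h1⟩ := hu
      obtain ⟨a2, b2, c2, h2⟩ := hv
      exact ⟨a1 + a2, b1 + b2, c1 + c2, by rw [lie_add, h1, h2]; module⟩
    | smul c u _ hu =>
      obtain ⟨a1, b1, c1, h1⟩ := hu
      exact ⟨c * a1, c * b1, c * c1, by rw [lie_smul, h1]; module⟩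
  have hzV : ∀ v : V, ⁅z, v⁆ = 0 := by
    let K : LieSubmodule ℂ S V :=
      { carrier := {v | ⁅z, v⁆ = 0}
        add_mem' := fun {a b} ha hb => by
          simp only [Set.mem_setOf_eq] at *
          rw [lie_add, ha, hb, add_zero]
        zero_mem' := by simp
        smul_mem' := fun c v hv => by
          simp only [Set.mem_setOf_eq] at *
          rw [lie_smul, hv, smul_zero]
        lie_mem := fun {x m} hm => by
          simp only [Set.mem_setOf_eq] at *
          rw [leibniz_lie, hzx, zero_lie, hm, lie_zero, add_zero] }
    intro v
    have htop : (⊤ : LieSubmodule ℂ S V) ≤ K :=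
      hspan ▸ LieSubmodule.lieSpan_le.mpr (Set.singleton_subset_iff.mpr hwz)
    exact htop (LieSubmodule.mem_top v)
  set A : Module.End ℂ V := LieModule.toEnd ℂ S V p - φp • 1 with hAdef
  set B : Module.End ℂ V := LieModule.toEnd ℂ S V q - φq • 1 with hBdef
  have hAv : ∀ v : V, A v = ⁅p, v⁆ - φp • v := fun v => by
    simp [hAdef, LinearMap.sub_apply, LinearMap.smul_apply, Module.End.one_apply,
      LieModule.toEnd_apply_apply]
  have hBv : ∀ v : V, B v = ⁅q, v⁆ - φq • v := fun v => by
    simp [hBdef, LinearMap.sub_apply, LinearMap.smul_apply, Module.End.one_apply,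
      LieModule.toEnd_apply_apply]
  have hcomm : ∀ t, t = A ∨ t = B → ∀ (x : S) (v : V),
      ∃ a b d : ℂ, t ⁅x, v⁆ = ⁅x, t v⁆ + a • A v + b • B v + d • v := by
    rintro t (rfl | rfl) x v
    · obtain ⟨a, b, c, hab⟩ := hpx x
      refine ⟨a, b, a * φp + b * φq, ?_⟩
      simp only [hAv, hBv]
      rw [leibniz_lie, hab]
      simp only [add_lie, smul_lie, lie_sub, lie_smul, hzV, smul_zero, add_zero]
      module
    · obtain ⟨a, b, c, hab⟩ := hqx x
      refine ⟨a, b, a * φp + b * φq, ?_⟩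
      simp only [hAv, hBv]
      rw [leibniz_lie, hab]
      simp only [add_lie, smul_lie, lie_sub, lie_smul, hzV, smul_zero, add_zero]
      module
  have key := qwd_lie hcomm
  have hDw : QWD A B 1 w := by
    intro L hL hlen
    rw [List.length_eq_one_iff] at hlen
    obtain ⟨t, rfl⟩ := hlen
    rcases hL t (by simp) with rfl | rfl
    · simp [hAv, hwp]
    · simp [hBv, hwq]
  have hDall : ∀ v : V, ∃ n, QWD A B n v := by
    let N : LieSubmodule ℂ S V :=
      { carrier := {v | ∃ n, QWD A B n v}
        add_mem' := fun {u v} hu hv => by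
          obtain ⟨n, hn⟩ := hu
          obtain ⟨m, hm⟩ := hv
          exact ⟨max n m, (hn.le (le_max_left n m)).add (hm.le (le_max_right n m))⟩
        zero_mem' := ⟨0, qwd_zero⟩
        smul_mem' := fun c v hv => by
          obtain ⟨n, hn⟩ := hv
          exact ⟨n, hn.smul c⟩
        lie_mem := fun {x v} hv => by
          obtain ⟨n, hn⟩ := hv
          exact ⟨n + 1, key n v hn x⟩ }
    intro v
    have htop : (⊤ : LieSubmodule ℂ S V) ≤ N :=
      hspan ▸ LieSubmodule.lieSpan_le.mpr (Set.singleton_subset_iff.mpr ⟨1, hDw⟩)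
    exact htop (LieSubmodule.mem_top v)
  have hWA : ∀ v ∈ W, A v ∈ W := fun v hv => by
    rw [hAv]; exact W.sub_mem (W.lie_mem hv) (W.smul_mem φp hv)
  have hWB : ∀ v ∈ W, B v ∈ W := fun v hv => by
    rw [hBv]; exact W.sub_mem (W.lie_mem hv) (W.smul_mem φq hv)
  have ext : ∀ n, ∀ v ∈ W, v ≠ 0 → QWD A B n v →
      ∃ u ∈ W, IsQWVector p q z φp φq u := by
    intro n
    induction n with
    | zero =>
      intro v hv hv0 hD
      exact absurd (by simpa using hD [] (by simp) rfl) hv0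
    | succ n ih =>
      intro v hv hv0 hD
      by_cases hA0 : A v = 0
      · by_cases hB0 : B v = 0
        · rw [hAv] at hA0
          rw [hBv] at hB0
          exact ⟨v, hv, hv0, sub_eq_zero.mp hA0, sub_eq_zero.mp hB0, hzV v⟩
        · exact ih (B v) (hWB v hv) hB0 (qwd_apply hD B (Or.inr rfl))
      · exact ih (A v) (hWA v hv) hA0 (qwd_apply hD A (Or.inl rfl))
  obtain ⟨v0, hv0W, hv00⟩ : ∃ v ∈ W, v ≠ 0 := by
    by_contra hcon
    push_neg at hcon
    exact hW ((LieSubmodule.eq_bot_iff W).mpr hcon)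
  obtain ⟨n, hn⟩ := hDall v0
  exact ext n v0 hv0W hv00 hn


end QW
end
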